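/- Abel's five-term relation for the Rogers dilogarithm: define R(z) = Li₂(z) + (1/2)·log(z)·log(1−z) for z ∈ (0,1), where Li₂(z) = ∑_{n≥1} zⁿ/n². Then for all x, y ∈ (0,1), R(x) + R((1−x)/(1−xy)) + R((1−y)/(1−xy)) + R(y) + R(1−xy) = π²/2 (a constant independent of x and y). -/

import Mathlib

/-! Since `R'(z) = -(log (1 - z) / z + log z / (1 - z)) / 2`, the derivative in `x` of the
five-term sum vanishes identically once the logarithms of the five arguments are expanded in
`log x, log y, log (1 - x), log (1 - y), log (1 - x y)`. The sum is therefore constant in `x`, and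
being symmetric in `x, y`, it equals its value at `x = y = t` for every `t ∈ (0,1)`. As `t → 0⁺`
the five arguments tend to `0, 1, 1, 0, 1`, and `R(0⁺) = 0`, `R(1⁻) = Li₂(1) = π²/6` (the term
`log z · log (1 - z)` vanishes at both ends), so the constant is `3 · π²/6`. -/

noncomputable def Li2R (x : ℝ) : ℝ := ∑' n : ℕ, x ^ (n + 1) / ((n : ℝ) + 1) ^ 2

noncomputable def RogersL (z : ℝ) : ℝ := Li2R z + (1 / 2) * Real.log z * Real.log (1 - z)

open Real Filter Set Topology

lemma continuousOn_Li2R : ContinuousOn Li2R (Icc (-1) 1) := by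
  have hsummable : Summable fun n : ℕ => 1 / ((n : ℝ) + 1) ^ 2 := by
    exact_mod_cast (summable_nat_add_iff 1).mpr (summable_one_div_nat_pow.mpr one_lt_two)
  have hbound (n : ℕ) (x : Icc (-1 : ℝ) 1) :
      ‖(x : ℝ) ^ (n + 1) / ((n : ℝ) + 1) ^ 2‖ ≤ 1 / ((n : ℝ) + 1) ^ 2 := by
    rw [norm_div, norm_pow, Real.norm_eq_abs, Real.norm_of_nonneg (by positivity)]
    gcongr
    exact pow_le_one₀ (abs_nonneg _) (abs_le.mpr x.2)
  rw [continuousOn_iff_continuous_domRestrict]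
  exact continuous_tsum (fun n => (continuous_subtype_val.pow _).div_const _) hsummable hbound

@[simp] lemma Li2R_zero : Li2R 0 = 0 := by
  simp [Li2R]

lemma Li2R_one : Li2R 1 = π ^ 2 / 6 := by
  have h := (hasSum_nat_add_iff' 1).mpr hasSum_zeta_two
  simpa [Li2R] using h.tsum_eq

lemma hasDerivAt_Li2R {z : ℝ} (hz : |z| < 1) (hz0 : z ≠ 0) :
    HasDerivAt Li2R (-log (1 - z) / z) z := by
  obtain ⟨r, hzr, hr1⟩ := exists_between hz
  have hr0 : 0 < r := (abs_nonneg z).trans_lt hzr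
  have hseries : HasDerivAt Li2R (∑' n : ℕ, z ^ n / ((n : ℝ) + 1)) z := by
    refine hasDerivAt_tsum_of_isPreconnected (y₀ := 0) (t := Ioo (-r) r) (u := fun n : ℕ => r ^ n)
      (g := fun (n : ℕ) w => w ^ (n + 1) / ((n : ℝ) + 1) ^ 2)
      (g' := fun (n : ℕ) w => w ^ n / ((n : ℝ) + 1))
      (summable_geometric_of_lt_one hr0.le hr1) isOpen_Ioo (convex_Ioo _ _).isPreconnected
      (fun n w _ => ?_) (fun n w hw => ?_) ⟨by linarith, hr0⟩ (by simp [summable_zero])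
      (abs_lt.mp hzr)
    · refine ((hasDerivAt_pow (n + 1) w).div_const _).congr_deriv ?_
      rw [Nat.add_sub_cancel]
      push_cast
      field_simp
    · rw [norm_div, norm_pow, Real.norm_of_nonneg (by positivity : (0 : ℝ) ≤ n + 1)]
      calc ‖w‖ ^ n / ((n : ℝ) + 1) ≤ ‖w‖ ^ n := div_le_self (by positivity) (by simp)
        _ ≤ r ^ n := by gcongr; exact abs_lt.mpr hw |>.le
  have hsum : HasSum (fun n : ℕ => z ^ n / ((n : ℝ) + 1)) (-log (1 - z) / z) := by
    convert (Real.hasSum_pow_div_log_of_abs_lt_one hz).div_const z using 2 with n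
    · rfl
    · rw [pow_succ]
      field_simp
  rwa [hsum.tsum_eq] at hseries

lemma hasDerivAt_RogersL {z : ℝ} (hz : z ∈ Ioo (0 : ℝ) 1) :
    HasDerivAt RogersL (-(1 / 2) * (log (1 - z) / z + log z / (1 - z))) z := by
  obtain ⟨hz0, hz1⟩ := hz
  have hz1' : 1 - z ≠ 0 := by linarith
  have hLi2 := hasDerivAt_Li2R (abs_lt.mpr ⟨by linarith, hz1⟩) hz0.ne'
  have hlog := hasDerivAt_log hz0.ne'
  have hlog_one_sub := ((hasDerivAt_id z).const_sub 1).log hz1'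
  refine (hLi2.add ((hlog.const_mul (1 / 2)).mul hlog_one_sub)).congr_deriv ?_
  simp only [id]
  field_simp
  ring

lemma tendsto_log_mul_log_one_sub_nhdsGT_zero :
    Tendsto (fun z => log z * log (1 - z)) (𝓝[>] 0) (𝓝 0) := by
  have hslope : Tendsto (fun z => log (1 - z) / z) (𝓝[>] 0) (𝓝 (-1)) := by
    have h : HasDerivAt (fun z => log (1 - z)) (-1) 0 := by
      simpa using ((hasDerivAt_id (0 : ℝ)).const_sub 1).log (by norm_num)
    simpa [div_eq_inv_mul] using h.tendsto_slope_zero_right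
  have hmul : Tendsto (fun z => z * log z) (𝓝[>] 0) (𝓝 0) := by
    simpa using continuous_mul_log.continuousWithinAt (s := Ioi 0) (x := 0) |>.tendsto
  have := hmul.mul hslope
  rw [zero_mul] at this
  refine this.congr' (eventually_mem_nhdsWithin.mono fun z (hz : 0 < z) => ?_)
  field_simp

lemma continuousWithinAt_Li2R_Ioo {a : ℝ} (ha : a ∈ Icc (0 : ℝ) 1) :
    ContinuousWithinAt Li2R (Ioo 0 1) a :=
  (continuousOn_Li2R a ⟨by linarith [ha.1], ha.2⟩).mono fun _ ht => ⟨by linarith [ht.1], ht.2.le⟩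

lemma tendsto_RogersL_nhdsGT_zero : Tendsto RogersL (𝓝[>] 0) (𝓝 0) := by
  have hLi2 : Tendsto Li2R (𝓝[>] 0) (𝓝 0) := by
    have h := (continuousWithinAt_Li2R_Ioo (left_mem_Icc.mpr zero_le_one)).tendsto
    rwa [Li2R_zero, nhdsWithin_Ioo_eq_nhdsGT one_pos] at h
  simpa using (hLi2.add (tendsto_log_mul_log_one_sub_nhdsGT_zero.const_mul (1 / 2))).congr
    fun z => by unfold RogersL; ring

lemma tendsto_RogersL_nhdsLT_one : Tendsto RogersL (𝓝[<] 1) (𝓝 (π ^ 2 / 6)) := by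
  have hLi2 : Tendsto Li2R (𝓝[<] 1) (𝓝 (π ^ 2 / 6)) := by
    have h := (continuousWithinAt_Li2R_Ioo (right_mem_Icc.mpr zero_le_one)).tendsto
    rwa [Li2R_one, nhdsWithin_Ioo_eq_nhdsLT one_pos] at h
  have hreflect : Tendsto (fun z : ℝ => 1 - z) (𝓝[<] 1) (𝓝[>] 0) := by
    have h := ((continuous_sub_left (1 : ℝ)).continuousWithinAt (s := Iio 1) (x := 1))
    simpa using h.tendsto_nhdsWithin fun z (hz : z < 1) => mem_Ioi.mpr (by linarith)
  have hlog := tendsto_log_mul_log_one_sub_nhdsGT_zero.comp hreflect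
  simpa using (hLi2.add (hlog.const_mul (1 / 2))).congr
    fun z => by simp only [Function.comp, sub_sub_cancel]; unfold RogersL; ring

lemma one_sub_mul_mem_Ioo {x y : ℝ} (hx : x ∈ Ioo (0 : ℝ) 1) (hy : y ∈ Ioo (0 : ℝ) 1) :
    1 - x * y ∈ Ioo (0 : ℝ) 1 := by
  obtain ⟨hx0, hx1⟩ := hx
  obtain ⟨hy0, hy1⟩ := hy
  constructor <;> nlinarith

lemma one_sub_div_one_sub_mul_mem_Ioo {x y : ℝ} (hx : x ∈ Ioo (0 : ℝ) 1)
    (hy : y ∈ Ioo (0 : ℝ) 1) : (1 - x) / (1 - x * y) ∈ Ioo (0 : ℝ) 1 := by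
  have hu := (one_sub_mul_mem_Ioo hx hy).1
  obtain ⟨hx0, hx1⟩ := hx
  exact ⟨div_pos (by linarith) hu, (div_lt_one hu).mpr (by nlinarith [hy.2])⟩

noncomputable def rogersFiveTerm (x y : ℝ) : ℝ :=
  RogersL x + RogersL ((1 - x) / (1 - x * y)) + RogersL ((1 - y) / (1 - x * y)) +
    RogersL y + RogersL (1 - x * y)

lemma rogersFiveTerm_comm (x y : ℝ) : rogersFiveTerm x y = rogersFiveTerm y x := by
  unfold rogersFiveTerm
  rw [mul_comm y x]
  ring

lemma hasDerivAt_rogersFiveTerm_left {x y : ℝ} (hx : x ∈ Ioo (0 : ℝ) 1)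
    (hy : y ∈ Ioo (0 : ℝ) 1) : HasDerivAt (fun x => rogersFiveTerm x y) 0 x := by
  have hu_mem := one_sub_mul_mem_Ioo hx hy
  have ha_mem := one_sub_div_one_sub_mul_mem_Ioo hx hy
  have hb_mem := one_sub_div_one_sub_mul_mem_Ioo hy hx
  rw [mul_comm y x] at hb_mem
  have hu_deriv : HasDerivAt (fun x => 1 - x * y) (-y) x := by
    simpa using ((hasDerivAt_id x).mul_const y).const_sub 1
  have ha_deriv := ((hasDerivAt_id x).const_sub 1).div hu_deriv hu_mem.1.ne'
  have hb_deriv := (hasDerivAt_const x (1 - y)).div hu_deriv hu_mem.1.ne'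
  refine ((((hasDerivAt_RogersL hx).add ((hasDerivAt_RogersL ha_mem).comp x ha_deriv)).add
    ((hasDerivAt_RogersL hb_mem).comp x hb_deriv)).add (hasDerivAt_const x (RogersL y))).add
    ((hasDerivAt_RogersL hu_mem).comp x hu_deriv) |>.congr_deriv ?_
  obtain ⟨hx0, hx1⟩ := hx
  obtain ⟨hy0, hy1⟩ := hy
  have hx1' : 1 - x ≠ 0 := by linarith
  have hy1' : 1 - y ≠ 0 := by linarith
  have hu0 : 1 - x * y ≠ 0 := hu_mem.1.ne'
  have one_sub_a : 1 - (1 - x) / (1 - x * y) = x * (1 - y) / (1 - x * y) := by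
    rw [one_sub_div hu0]; ring
  have one_sub_b : 1 - (1 - y) / (1 - x * y) = y * (1 - x) / (1 - x * y) := by
    rw [one_sub_div hu0]; ring
  rw [one_sub_a, one_sub_b, sub_sub_cancel, log_mul hx0.ne' hy0.ne', log_div hx1' hu0,
    log_div hy1' hu0, log_div (by positivity) hu0, log_div (by positivity) hu0,
    log_mul hx0.ne' hy1', log_mul hy0.ne' hx1']
  simp only [id]
  field_simp
  ring

lemma rogersFiveTerm_left_eq {x x' y : ℝ} (hx : x ∈ Ioo (0 : ℝ) 1) (hx' : x' ∈ Ioo (0 : ℝ) 1)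
    (hy : y ∈ Ioo (0 : ℝ) 1) : rogersFiveTerm x y = rogersFiveTerm x' y :=
  isOpen_Ioo.is_const_of_deriv_eq_zero isPreconnected_Ioo
    (fun _ ht => (hasDerivAt_rogersFiveTerm_left ht hy).differentiableAt.differentiableWithinAt)
    (fun _ ht => (hasDerivAt_rogersFiveTerm_left ht hy).deriv) hx hx'

lemma rogersFiveTerm_eq_diag {x y t : ℝ} (hx : x ∈ Ioo (0 : ℝ) 1) (hy : y ∈ Ioo (0 : ℝ) 1)
    (ht : t ∈ Ioo (0 : ℝ) 1) : rogersFiveTerm x y = rogersFiveTerm t t := by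
  rw [rogersFiveTerm_left_eq hx ht hy, rogersFiveTerm_comm, rogersFiveTerm_left_eq hy ht ht]

lemma tendsto_rogersFiveTerm_diag :
    Tendsto (fun t => rogersFiveTerm t t) (𝓝[>] 0) (𝓝 (π ^ 2 / 2)) := by
  have hIoo : ∀ᶠ t in 𝓝[>] (0 : ℝ), t ∈ Ioo (0 : ℝ) 1 := Ioo_mem_nhdsGT one_pos
  have ha : Tendsto (fun t : ℝ => (1 - t) / (1 - t * t)) (𝓝[>] 0) (𝓝[<] 1) := by
    refine tendsto_nhdsWithin_iff.mpr ⟨?_, hIoo.mono fun t ht =>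
      (one_sub_div_one_sub_mul_mem_Ioo ht ht).2⟩
    have h : ContinuousAt (fun t : ℝ => (1 - t) / (1 - t * t)) 0 :=
      ContinuousAt.div (by fun_prop) (by fun_prop) (by norm_num)
    simpa using h.tendsto.mono_left nhdsWithin_le_nhds
  have hu : Tendsto (fun t : ℝ => 1 - t * t) (𝓝[>] 0) (𝓝[<] 1) := by
    refine tendsto_nhdsWithin_iff.mpr ⟨?_, hIoo.mono fun t ht => (one_sub_mul_mem_Ioo ht ht).2⟩
    have h : ContinuousAt (fun t : ℝ => 1 - t * t) 0 := by fun_prop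
    simpa using h.tendsto.mono_left nhdsWithin_le_nhds
  have h0 := tendsto_RogersL_nhdsGT_zero
  have h1a := tendsto_RogersL_nhdsLT_one.comp ha
  have h1u := tendsto_RogersL_nhdsLT_one.comp hu
  have h := (((h0.add h1a).add h1a).add h0).add h1u
  rwa [show (0 : ℝ) + π ^ 2 / 6 + π ^ 2 / 6 + 0 + π ^ 2 / 6 = π ^ 2 / 2 by ring] at h

/-- Abel's five-term relation: for `x, y ∈ (0,1)`,
`R(x) + R((1−x)/(1−xy)) + R((1−y)/(1−xy)) + R(y) + R(1−xy) = π²/2`. -/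
theorem abel_five_term (x y : ℝ)
    (hx : x ∈ Set.Ioo (0 : ℝ) 1) (hy : y ∈ Set.Ioo (0 : ℝ) 1) :
    RogersL x + RogersL ((1 - x) / (1 - x * y)) + RogersL ((1 - y) / (1 - x * y)) +
      RogersL y + RogersL (1 - x * y) = Real.pi ^ 2 / 2 := by
  have hdiag : ∀ᶠ t in 𝓝[>] (0 : ℝ), rogersFiveTerm t t = rogersFiveTerm x y := by
    filter_upwards [Ioo_mem_nhdsGT one_pos] with t ht
    exact (rogersFiveTerm_eq_diag hx hy ht).symm
  exact (tendsto_nhds_unique (tendsto_rogersFiveTerm_diag.congr' hdiag) tendsto_const_nhds).symm
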